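/- Let h : X → Y be a flip conjugacy between Smale spaces (X,φ) and (Y,ψ). Then the map η : X×X → Y×Y defined by η(x,z) = (h(x),h(z)) restricts to an isomorphism of topological groupoids from G_φ^a onto G_ψ^a: it is a bijection from G_φ^a onto G_ψ^a preserving the groupoid (equivalence relation) structure, and it is a homeomorphism with respect to the inductive limit topologies on G_φ^a and G_ψ^a. -/

import Mathlib

open Filter Set Topology

noncomputable section

/-- Integer iterate of a homeomorphism. -/
def hIter {X : Type*} [TopologicalSpace X] (φ : X ≃ₜ X) (n : ℤ) (x : X) : X :=
  ((φ.toEquiv : Equiv.Perm X) ^ n) x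

/-- The cocycle sums `f^n` of a function `f : X → ℤ` along the iterates of `φ`:
`f^n(x) = Σ_{i=0}^{n-1} f(φ^i(x))` for `n > 0`, `f^0 = 0`, and
`f^n(x) = −Σ_{i=n}^{-1} f(φ^i(x))` for `n < 0`. -/
def cSum {X : Type*} [TopologicalSpace X] (φ : X ≃ₜ X) (f : X → ℤ) (n : ℤ) (x : X) : ℤ :=
  if 0 ≤ n then ∑ i ∈ Finset.range n.toNat, f (hIter φ i x)
  else -∑ i ∈ Finset.range (-n).toNat, f (hIter φ (n + i) x)

/-- Stable asymptotic pairs (limit definition). -/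
def asympS {X : Type*} [MetricSpace X] (φ : X ≃ₜ X) : Set (X × X) :=
  {p | Tendsto (fun n : ℕ => dist (hIter φ n p.1) (hIter φ n p.2)) atTop (nhds 0)}

/-- Unstable asymptotic pairs (limit definition). -/
def asympU {X : Type*} [MetricSpace X] (φ : X ≃ₜ X) : Set (X × X) :=
  {p | Tendsto (fun n : ℕ => dist (hIter φ (-(n : ℤ)) p.1) (hIter φ (-(n : ℤ)) p.2))
    atTop (nhds 0)}

/-- Asymptotic pairs (limit definition). -/
def asympA {X : Type*} [MetricSpace X] (φ : X ≃ₜ X) : Set (X × X) := asympS φ ∩ asympU φ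

/-- The `ω`-limit set of `x`. -/
def omegaSet {X : Type*} [MetricSpace X] (φ : X ≃ₜ X) (x : X) : Set X :=
  {z | ∃ n : ℕ → ℕ, StrictMono n ∧ Tendsto (fun i => hIter φ (n i) x) atTop (nhds z)}

/-- The `α`-limit set of `x`. -/
def alphaSet {X : Type*} [MetricSpace X] (φ : X ≃ₜ X) (x : X) : Set X :=
  {z | ∃ n : ℕ → ℤ, StrictAnti n ∧ Tendsto (fun i => hIter φ (n i) x) atTop (nhds z)}

/-- A Smale space structure on a compact metric space `X`. -/
structure SmaleSpace (X : Type*) [MetricSpace X] [CompactSpace X] where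
  phi : X ≃ₜ X
  eps : ℝ
  lam : ℝ
  br : X → X → X
  eps_pos : 0 < eps
  lam_pos : 0 < lam
  lam_lt_one : lam < 1
  br_cont : ContinuousOn (fun p : X × X => br p.1 p.2) {p : X × X | dist p.1 p.2 < eps}
  br_self : ∀ x : X, br x x = x
  br_assoc_left : ∀ x y z : X, dist x y < eps → dist (br x y) z < eps → dist x z < eps →
    br (br x y) z = br x z
  br_assoc_right : ∀ x y z : X, dist y z < eps → dist x (br y z) < eps → dist x z < eps →
    br x (br y z) = br x z
  phi_br : ∀ x y : X, dist x y < eps → dist (phi x) (phi y) < eps →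
    phi (br x y) = br (phi x) (phi y)
  contract_s : ∀ x y z : X, br y x = y → dist x y < eps → br z x = z → dist x z < eps →
    dist (phi y) (phi z) ≤ lam * dist y z
  contract_u : ∀ x y z : X, br x y = y → dist x y < eps → br x z = z → dist x z < eps →
    dist (phi.symm y) (phi.symm z) ≤ lam * dist y z

namespace SmaleSpace

variable {X Y : Type*} [MetricSpace X] [CompactSpace X] [MetricSpace Y] [CompactSpace Y]

/-- Local stable set `X^s(x,ε)`. -/
def Xs (S : SmaleSpace X) (x : X) (ε : ℝ) : Set X := {y | S.br y x = y ∧ dist x y < ε}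

/-- Local unstable set `X^u(x,ε)`. -/
def Xu (S : SmaleSpace X) (x : X) (ε : ℝ) : Set X := {y | S.br x y = y ∧ dist x y < ε}

def Gs0 (S : SmaleSpace X) : Set (X × X) := {p | p.2 ∈ S.Xs p.1 S.eps}

def Gu0 (S : SmaleSpace X) : Set (X × X) := {p | p.2 ∈ S.Xu p.1 S.eps}

/-- `G_φ^{s,n} = (φ×φ)^{-n}(G_φ^{s,0})`. -/
def GsN (S : SmaleSpace X) (n : ℤ) : Set (X × X) :=
  {p | (hIter S.phi n p.1, hIter S.phi n p.2) ∈ S.Gs0}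

/-- `G_φ^{u,n} = (φ×φ)^{n}(G_φ^{u,0})`. -/
def GuN (S : SmaleSpace X) (n : ℤ) : Set (X × X) :=
  {p | (hIter S.phi (-n) p.1, hIter S.phi (-n) p.2) ∈ S.Gu0}

def GaN (S : SmaleSpace X) (n : ℤ) : Set (X × X) := S.GsN n ∩ S.GuN n

/-- The asymptotic equivalence relation `G_φ^a = ⋃_{n ≥ 0} G_φ^{a,n}`. -/
def Ga (S : SmaleSpace X) : Set (X × X) := ⋃ n : ℕ, S.GaN n

lemma gaN_subset_ga (S : SmaleSpace X) (n : ℕ) : S.GaN n ⊆ S.Ga :=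
  Set.subset_iUnion (fun k : ℕ => S.GaN k) n

/-- The inductive limit topology on `G_φ^a`: a set is open iff its intersection with each
`G_φ^{a,n}` is open in the subspace topology from `X × X`. -/
def gaTopology (S : SmaleSpace X) : TopologicalSpace ↥S.Ga :=
  ⨆ n : ℕ, TopologicalSpace.coinduced (Set.inclusion (S.gaN_subset_ga n)) inferInstance

/-- Irreducibility of a Smale space. -/
def Irreducible (S : SmaleSpace X) : Prop :=
  ∀ U V : Set X, IsOpen U → U.Nonempty → IsOpen V → V.Nonempty →
    ∃ K : ℕ, ((hIter S.phi K '' U) ∩ V).Nonempty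

def IsPeriodicPoint (S : SmaleSpace X) (x : X) : Prop :=
  ∃ p : ℕ, 0 < p ∧ hIter S.phi p x = x

/-- `h` is a flip conjugacy between `(X,φ)` and `(Y,ψ)`. -/
def IsFlipConjugacy (S : SmaleSpace X) (T : SmaleSpace Y) (h : X ≃ₜ Y) : Prop :=
  (∀ x, h (S.phi x) = T.phi (h x)) ∨ (∀ x, h (S.phi x) = T.phi.symm (h x))

def FlipConjugate (S : SmaleSpace X) (T : SmaleSpace Y) : Prop :=
  ∃ h : X ≃ₜ Y, IsFlipConjugacy S T h

/-- An isomorphism of the principal étale groupoids `G_φ^a` and `G_ψ^a`: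
a bijection which is a homeomorphism for the inductive limit topologies and preserves
the (equivalence relation) groupoid structure. -/
structure GaIso (S : SmaleSpace X) (T : SmaleSpace Y) where
  toEquiv : ↥S.Ga ≃ ↥T.Ga
  cont : @Continuous _ _ S.gaTopology T.gaTopology toEquiv
  cont_symm : @Continuous _ _ T.gaTopology S.gaTopology toEquiv.symm
  map_mul : ∀ p q r : ↥S.Ga, (p : X × X).2 = (q : X × X).1 →
    (r : X × X) = ((p : X × X).1, (q : X × X).2) →
    (toEquiv p : Y × Y).2 = (toEquiv q : Y × Y).1 ∧
      (toEquiv r : Y × Y) = ((toEquiv p : Y × Y).1, (toEquiv q : Y × Y).2)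

end SmaleSpace

/-!
Up to constants, `(x, z) ∈ G^{s,n}` means that the forward orbits of `x` and `z` stay uniformly
close from time `n` on. One direction is contraction on local stable sets. For the other,
`w = [z, x]` is stably related to `x` and unstably related to `z`, so the forward orbits of `z`
and `w` stay close, and expansivity on local unstable sets forces `w = z`. Since `h` is uniformly
continuous and carries `φ`-orbits to `ψ`-orbits, `η` maps each `G^{s,n}_φ` into `G^{s,m}_ψ` for
all large `m`. Unstable sets are the stable sets of the time-reversed Smale space, which also
covers the orientation-reversing case, so `η` maps each `G^{a,n}_φ` continuously into some
`G^{a,m}_ψ`: that is continuity for the inductive limit topologies, and `h⁻¹` gives the inverse.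
-/

section HIter

variable {X : Type*} [TopologicalSpace X] (φ : X ≃ₜ X)

lemma hIter_natCast (n : ℕ) : hIter φ n = φ^[n] := by
  ext x
  simp [hIter, Equiv.Perm.coe_pow]

lemma hIter_symm (n : ℤ) : hIter φ.symm n = hIter φ (-n) := by
  ext x
  simp only [hIter, ← inv_zpow']
  rfl

end HIter

lemma Function.Semiconj.homeomorph_symm {X Y : Type*} [TopologicalSpace X] [TopologicalSpace Y]
    {h : X → Y} {φ : X ≃ₜ X} {ψ : Y ≃ₜ Y} (hc : Function.Semiconj h φ ψ) :
    Function.Semiconj h φ.symm ψ.symm :=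
  hc.inverses_right φ.apply_symm_apply ψ.symm_apply_apply

namespace SmaleSpace

variable {X Y : Type*} [MetricSpace X] [CompactSpace X] [MetricSpace Y] [CompactSpace Y]

section Contraction

variable (S : SmaleSpace X)

lemma dist_phi_le_of_mem_xs {x z : X} (hz : z ∈ S.Xs x S.eps) :
    dist (S.phi x) (S.phi z) ≤ S.lam * dist x z :=
  S.contract_s x x z (S.br_self x) (by simpa using S.eps_pos) hz.1 hz.2

lemma phi_mem_xs {x z : X} (hz : z ∈ S.Xs x S.eps) : S.phi z ∈ S.Xs (S.phi x) S.eps := by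
  have hlt : dist (S.phi x) (S.phi z) < S.eps :=
    (S.dist_phi_le_of_mem_xs hz).trans_lt
      ((mul_le_of_le_one_left dist_nonneg S.lam_lt_one.le).trans_lt hz.2)
  refine ⟨?_, hlt⟩
  rw [← S.phi_br z x (by rw [dist_comm]; exact hz.2) (by rw [dist_comm]; exact hlt), hz.1]

lemma iterate_mem_xs {x z : X} (hz : z ∈ S.Xs x S.eps) (k : ℕ) :
    S.phi^[k] z ∈ S.Xs (S.phi^[k] x) S.eps := by
  induction k with
  | zero => exact hz
  | succ k ih => simpa only [Function.iterate_succ_apply'] using S.phi_mem_xs ih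

lemma dist_iterate_le_of_mem_xs {x z : X} (hz : z ∈ S.Xs x S.eps) (k : ℕ) :
    dist (S.phi^[k] x) (S.phi^[k] z) ≤ S.lam ^ k * dist x z := by
  induction k with
  | zero => simp
  | succ k ih =>
    simp only [Function.iterate_succ_apply']
    calc dist (S.phi (S.phi^[k] x)) (S.phi (S.phi^[k] z))
        ≤ S.lam * dist (S.phi^[k] x) (S.phi^[k] z) :=
          S.dist_phi_le_of_mem_xs (S.iterate_mem_xs hz k)
      _ ≤ S.lam * (S.lam ^ k * dist x z) := by gcongr; exact S.lam_pos.le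
      _ = S.lam ^ (k + 1) * dist x z := by ring

lemma dist_iterate_le_dist_of_mem_xs {x z : X} (hz : z ∈ S.Xs x S.eps) (k : ℕ) :
    dist (S.phi^[k] x) (S.phi^[k] z) ≤ dist x z :=
  (S.dist_iterate_le_of_mem_xs hz k).trans
    (mul_le_of_le_one_left dist_nonneg (pow_le_one₀ S.lam_pos.le S.lam_lt_one.le))

lemma eq_of_br_eq_of_forall_dist_iterate_le {δ : ℝ} (hδ : δ < S.eps) {x z : X}
    (hz : S.br x z = z) (hclose : ∀ k : ℕ, dist (S.phi^[k] x) (S.phi^[k] z) ≤ δ) : z = x := by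
  have hlt (k : ℕ) : dist (S.phi^[k] x) (S.phi^[k] z) < S.eps := (hclose k).trans_lt hδ
  have hbr (k : ℕ) : S.br (S.phi^[k] x) (S.phi^[k] z) = S.phi^[k] z := by
    induction k with
    | zero => exact hz
    | succ k ih =>
      have hlt' := hlt (k + 1)
      simp only [Function.iterate_succ_apply'] at hlt' ⊢
      rw [← S.phi_br _ _ (hlt k) hlt', ih]
  have hexpand (k : ℕ) : dist x z ≤ S.lam ^ k * dist (S.phi^[k] x) (S.phi^[k] z) := by
    induction k with
    | zero => simp
    | succ k ih =>
      have hback := S.contract_u _ _ _ (S.br_self _) (by simpa using S.eps_pos) (hbr (k + 1))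
        (hlt (k + 1))
      simp only [Function.iterate_succ_apply', Homeomorph.symm_apply_apply] at hback
      calc dist x z ≤ S.lam ^ k * dist (S.phi^[k] x) (S.phi^[k] z) := ih
        _ ≤ S.lam ^ k * (S.lam * dist (S.phi^[k + 1] x) (S.phi^[k + 1] z)) := by
          simp only [Function.iterate_succ_apply']
          gcongr
          exact pow_nonneg S.lam_pos.le k
        _ = S.lam ^ (k + 1) * dist (S.phi^[k + 1] x) (S.phi^[k + 1] z) := by ring
  have hlim : Tendsto (fun k : ℕ => S.lam ^ k * δ) atTop (𝓝 0) := by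
    simpa using (tendsto_pow_atTop_nhds_zero_of_lt_one S.lam_pos.le S.lam_lt_one).mul_const δ
  have hzero : dist x z ≤ 0 := ge_of_tendsto' hlim fun k =>
    (hexpand k).trans (mul_le_mul_of_nonneg_left (hclose k) (pow_nonneg S.lam_pos.le k))
  exact (dist_le_zero.mp hzero).symm

end Contraction

section Shadowing

variable (S : SmaleSpace X)

lemma exists_dist_br_lt {ε : ℝ} (hε : 0 < ε) :
    ∃ δ > 0, ∀ x y : X, dist x y < δ → dist (S.br x y) x < ε ∧ dist (S.br x y) y < ε := by
  set K : Set (X × X) := {p | dist p.1 p.2 ≤ S.eps / 2}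
  have hK : IsCompact K := (isClosed_le (by fun_prop) continuous_const).isCompact
  have hKsub : K ⊆ {p | dist p.1 p.2 < S.eps} := fun p hp =>
    hp.trans_lt (half_lt_self S.eps_pos)
  obtain ⟨δ, hδ, hbr⟩ := Metric.uniformContinuousOn_iff.mp
    (hK.uniformContinuousOn_of_continuous (S.br_cont.mono hKsub)) ε hε
  have hdiag (x : X) : (x, x) ∈ K := by simpa [K] using (half_pos S.eps_pos).le
  refine ⟨min δ (S.eps / 2), lt_min hδ (half_pos S.eps_pos), fun x y hxy => ?_⟩
  have hxyK : (x, y) ∈ K := hxy.le.trans (min_le_right _ _)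
  have hxyδ : dist x y < δ := hxy.trans_le (min_le_left _ _)
  constructor
  · simpa [S.br_self, dist_comm] using
      hbr _ hxyK _ (hdiag x) (by simpa [Prod.dist_eq, dist_comm] using hxyδ)
  · simpa [S.br_self] using hbr _ hxyK _ (hdiag y) (by simpa [Prod.dist_eq] using hxyδ)

lemma exists_mem_xs_of_forall_dist_iterate_le :
    ∃ δ > 0, ∀ x z : X, (∀ k : ℕ, dist (S.phi^[k] x) (S.phi^[k] z) ≤ δ) →
      z ∈ S.Xs x S.eps := by
  have hε : 0 < S.eps / 4 := by linarith [S.eps_pos]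
  obtain ⟨δ, hδ, hbr⟩ := S.exists_dist_br_lt hε
  refine ⟨min (δ / 2) (S.eps / 4), lt_min (half_pos hδ) hε, fun x z hclose => ?_⟩
  have hzx : dist z x ≤ S.eps / 4 := by
    simpa [dist_comm] using (hclose 0).trans (min_le_right _ _)
  have hzx' : dist z x < S.eps := by linarith [S.eps_pos]
  obtain ⟨hwz, hwx⟩ := hbr z x (by
    simpa [dist_comm] using (hclose 0).trans_lt ((min_le_left _ _).trans_lt (half_lt_self hδ)))
  set w := S.br z x
  have hw : w ∈ S.Xs x S.eps :=
    ⟨S.br_assoc_left z x x hzx' (by linarith) hzx', by rw [dist_comm]; linarith⟩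
  have hzw : S.br z w = w := S.br_assoc_right z z x hzx' (by rw [dist_comm]; linarith) hzx'
  have hwclose (k : ℕ) : dist (S.phi^[k] z) (S.phi^[k] w) ≤ S.eps / 2 := by
    calc dist (S.phi^[k] z) (S.phi^[k] w)
        ≤ dist (S.phi^[k] x) (S.phi^[k] z) + dist (S.phi^[k] x) (S.phi^[k] w) :=
          dist_triangle_left _ _ _
      _ ≤ S.eps / 4 + S.eps / 4 := by
          gcongr
          · exact (hclose k).trans (min_le_right _ _)
          · exact (S.dist_iterate_le_dist_of_mem_xs hw k).trans (by rw [dist_comm]; linarith)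
      _ = S.eps / 2 := by ring
  have hwz : w = z := S.eq_of_br_eq_of_forall_dist_iterate_le (half_lt_self S.eps_pos) hzw hwclose
  exact ⟨hwz ▸ hw.1, by rw [dist_comm]; exact hzx'⟩

end Shadowing

section StableMaps

variable (S : SmaleSpace X) (T : SmaleSpace Y)

lemma mem_gsN_natCast {p : X × X} {n : ℕ} :
    p ∈ S.GsN n ↔ S.phi^[n] p.2 ∈ S.Xs (S.phi^[n] p.1) S.eps := by
  simp only [GsN, Gs0, mem_ofPred_eq, hIter_natCast]

lemma dist_iterate_add_le_of_mem_gsN {p : X × X} {n : ℕ} (hp : p ∈ S.GsN n) (j : ℕ) :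
    dist (S.phi^[j + n] p.1) (S.phi^[j + n] p.2) ≤ S.lam ^ j * S.eps := by
  rw [mem_gsN_natCast] at hp
  simp only [Function.iterate_add_apply]
  exact (S.dist_iterate_le_of_mem_xs hp j).trans
    (mul_le_mul_of_nonneg_left hp.2.le (pow_nonneg S.lam_pos.le j))

lemma eventually_mapsTo_gsN {h : X → Y} (hh : Continuous h)
    (hc : Function.Semiconj h S.phi T.phi) (n : ℕ) :
    ∀ᶠ m : ℕ in atTop, MapsTo (Prod.map h h) (S.GsN n) (T.GsN m) := by
  obtain ⟨δ, hδ, hT⟩ := T.exists_mem_xs_of_forall_dist_iterate_le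
  obtain ⟨δX, hδX, hhδ⟩ := Metric.uniformContinuous_iff.mp
    (CompactSpace.uniformContinuous_of_continuous hh) δ hδ
  obtain ⟨K, hK⟩ := exists_pow_lt_of_lt_one (div_pos hδX S.eps_pos) S.lam_lt_one
  filter_upwards [eventually_ge_atTop (n + K)] with m hm p hp
  rw [mem_gsN_natCast]
  refine hT _ _ fun k => ?_
  obtain ⟨j, hj⟩ := Nat.exists_eq_add_of_le (hm.trans (Nat.le_add_left m k))
  simp only [Prod.map_fst, Prod.map_snd, ← Function.iterate_add_apply, ← (hc.iterate_right _) _]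
  rw [show k + m = (K + j) + n by omega]
  refine (hhδ ?_).le
  calc dist (S.phi^[K + j + n] p.1) (S.phi^[K + j + n] p.2)
      ≤ S.lam ^ (K + j) * S.eps := S.dist_iterate_add_le_of_mem_gsN hp _
    _ ≤ S.lam ^ K * S.eps := mul_le_mul_of_nonneg_right
        (pow_le_pow_of_le_one S.lam_pos.le S.lam_lt_one.le (Nat.le_add_right K j)) S.eps_pos.le
    _ < δX := (lt_div_iff₀ S.eps_pos).mp hK

end StableMaps

section TimeReversal

def symm (S : SmaleSpace X) : SmaleSpace X where
  phi := S.phi.symm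
  eps := S.eps
  lam := S.lam
  br x y := S.br y x
  eps_pos := S.eps_pos
  lam_pos := S.lam_pos
  lam_lt_one := S.lam_lt_one
  br_cont := S.br_cont.comp continuous_swap.continuousOn fun p hp => by
    simpa [dist_comm] using hp
  br_self := S.br_self
  br_assoc_left x y z hxy hyz hxz := by
    rw [dist_comm] at hxy hyz hxz
    exact S.br_assoc_right z y x hxy hyz hxz
  br_assoc_right x y z hyz hxy hxz := by
    rw [dist_comm] at hyz hxy hxz
    exact S.br_assoc_left z y x hyz hxy hxz
  phi_br x y hxy hφ := by
    rw [dist_comm] at hxy hφ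
    rw [Homeomorph.symm_apply_eq, S.phi_br _ _ hφ (by simpa using hxy)]
    simp
  contract_s := S.contract_u
  contract_u x y z := by simpa using S.contract_s x y z

lemma symm_gsN (S : SmaleSpace X) (n : ℤ) : S.symm.GsN n = S.GuN n := by
  ext p
  simp only [GsN, GuN, Gs0, Gu0, Xs, Xu, mem_ofPred_eq]
  rw [show S.symm.phi = S.phi.symm from rfl, hIter_symm]
  rfl

end TimeReversal

section FlipConjugacy

variable {S : SmaleSpace X} {T : SmaleSpace Y} {h : X ≃ₜ Y}

lemma IsFlipConjugacy.symm (hflip : IsFlipConjugacy S T h) : IsFlipConjugacy T S h.symm := by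
  obtain hc | hc : Function.Semiconj h S.phi T.phi ∨ Function.Semiconj h S.phi T.phi.symm := hflip
  · exact .inl (hc.inverse_left h.symm_apply_apply h.apply_symm_apply)
  · have hc' := hc.homeomorph_symm
    rw [Homeomorph.symm_symm] at hc'
    exact .inr (hc'.inverse_left h.symm_apply_apply h.apply_symm_apply)

lemma IsFlipConjugacy.eventually_mapsTo_gaN (hflip : IsFlipConjugacy S T h) (n : ℕ) :
    ∀ᶠ m : ℕ in atTop, MapsTo (Prod.map h h) (S.GaN n) (T.GaN m) := by
  obtain hc | hc : Function.Semiconj h S.phi T.phi ∨ Function.Semiconj h S.phi T.phi.symm := hflip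
  · filter_upwards [S.eventually_mapsTo_gsN T h.continuous hc n,
      S.symm.eventually_mapsTo_gsN T.symm h.continuous hc.homeomorph_symm n] with m hs hu
    rw [symm_gsN, symm_gsN] at hu
    exact hs.inter_inter hu
  · have hc' := hc.homeomorph_symm
    rw [Homeomorph.symm_symm] at hc'
    filter_upwards [S.eventually_mapsTo_gsN T.symm h.continuous hc n,
      S.symm.eventually_mapsTo_gsN T h.continuous hc' n] with m hs hu
    rw [symm_gsN] at hs hu
    rw [GaN, GaN, inter_comm (T.GsN m)]
    exact hs.inter_inter hu

lemma IsFlipConjugacy.mapsTo_ga (hflip : IsFlipConjugacy S T h) :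
    MapsTo (Prod.map h h) S.Ga T.Ga := by
  intro p hp
  obtain ⟨n, hpn⟩ := mem_iUnion.mp hp
  obtain ⟨m, hm⟩ := (hflip.eventually_mapsTo_gaN n).exists
  exact T.gaN_subset_ga m (hm hpn)

lemma IsFlipConjugacy.mem_ga_iff (hflip : IsFlipConjugacy S T h) (p : X × X) :
    p ∈ S.Ga ↔ Prod.map h h p ∈ T.Ga := by
  refine ⟨fun hp => hflip.mapsTo_ga hp, fun hp => ?_⟩
  simpa [Prod.map_map] using hflip.symm.mapsTo_ga hp

end FlipConjugacy

section InductiveLimitTopology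

variable (S : SmaleSpace X) (T : SmaleSpace Y)

lemma continuous_inclusion_gaN (m : ℕ) :
    Continuous[_, S.gaTopology] (inclusion (S.gaN_subset_ga m)) :=
  continuous_iSup_rng (i := m) continuous_coinduced_rng

lemma continuous_of_mapsTo_gaN {f : X × X → Y × Y} (hf : Continuous f)
    (hmaps : ∀ n : ℕ, ∃ m : ℕ, MapsTo f (S.GaN n) (T.GaN m)) (F : S.Ga → T.Ga)
    (hF : ∀ p, (F p : Y × Y) = f p) : Continuous[S.gaTopology, T.gaTopology] F := by
  refine continuous_iSup_dom.mpr fun n => continuous_coinduced_dom.mpr ?_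
  obtain ⟨m, hm⟩ := hmaps n
  have hfactor : F ∘ inclusion (S.gaN_subset_ga n) =
      inclusion (T.gaN_subset_ga m) ∘ hm.restrict f _ _ :=
    funext fun q => Subtype.ext (hF _)
  rw [hfactor]
  exact @Continuous.comp _ _ _ _ _ T.gaTopology _ _ (T.continuous_inclusion_gaN m)
    (hf.restrict hm)

end InductiveLimitTopology

def IsFlipConjugacy.gaIso {S : SmaleSpace X} {T : SmaleSpace Y} {h : X ≃ₜ Y}
    (hflip : IsFlipConjugacy S T h) : GaIso S T where
  toEquiv := (h.toEquiv.prodCongr h.toEquiv).subtypeEquiv hflip.mem_ga_iff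
  cont := S.continuous_of_mapsTo_gaN T (h.prodCongr h).continuous
    (fun n => (hflip.eventually_mapsTo_gaN n).exists) _ fun _ => rfl
  cont_symm := T.continuous_of_mapsTo_gaN S (h.prodCongr h).symm.continuous
    (fun n => (hflip.symm.eventually_mapsTo_gaN n).exists) _ fun _ => rfl
  map_mul _ _ _ hpq hr := ⟨congrArg h hpq, congrArg (Prod.map h h) hr⟩

end SmaleSpace

/-- A flip conjugacy `h : X → Y` induces, via `η(x,z) = (h(x),h(z))`,
an isomorphism of topological groupoids from `G_φ^a` onto `G_ψ^a` (a structure preserving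
bijection which is a homeomorphism for the inductive limit topologies). -/
theorem flipConjugacy_induces_gaIso {X Y : Type*} [MetricSpace X] [CompactSpace X]
    [MetricSpace Y] [CompactSpace Y] (S : SmaleSpace X) (T : SmaleSpace Y)
    (h : X ≃ₜ Y) (hflip : SmaleSpace.IsFlipConjugacy S T h) :
    ∃ E : SmaleSpace.GaIso S T, ∀ p : ↥S.Ga,
      (E.toEquiv p : Y × Y) = (h (p : X × X).1, h (p : X × X).2) :=
  ⟨hflip.gaIso, fun _ => rfl⟩
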